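/- For every integer p ≥ 1, one has (2/√π) · Γ(p/2 + 1) / Γ(p/2 + 1/2) < I(p) / I(p+1); equivalently, I(p+1) < (√π/2) · (Γ(p/2 + 1/2)/Γ(p/2 + 1)) · I(p). -/

import Mathlib

open Real

/-- The integration region `R(p)` written with `m = p - 1` variables `φ_1, …, φ_{p-1}`
(zero-indexed): `φ_1 ∈ [π/4, π/2]` and `φ_i ∈ [arctan(∏_{j<i} csc φ_j), π/2]`. -/
noncomputable def Rregion (m : ℕ) : Set (Fin m → ℝ) :=
  {φ | ∀ i : Fin m,
    φ i ∈ Set.Icc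
      (if (i : ℕ) = 0 then π / 4
       else Real.arctan (∏ j ∈ Finset.univ.filter (fun j : Fin m => j < i),
         (Real.sin (φ j))⁻¹))
      (π / 2)}

/-- `I(1) = 1` and, for `p ≥ 2`, `I(p) = ∫_{R(p)} ∏_{i=1}^{p-1} sin^i(φ_i) dφ`. -/
noncomputable def Ifun (p : ℕ) : ℝ :=
  if p ≤ 1 then 1
  else ∫ φ in Rregion (p - 1), ∏ i : Fin (p - 1), Real.sin (φ i) ^ ((i : ℕ) + 1)

open MeasureTheory

noncomputable def lbd (m : ℕ) (φ : Fin m → ℝ) (i : Fin m) : ℝ :=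
  if (i : ℕ) = 0 then π / 4
  else Real.arctan (∏ j ∈ Finset.univ.filter (fun j : Fin m => j < i),
    (Real.sin (φ j))⁻¹)

noncomputable def Afun (m : ℕ) (y : Fin m → ℝ) : ℝ :=
  Real.arctan (∏ j : Fin m, (Real.sin (y j))⁻¹)

noncomputable def Ffun (m : ℕ) (φ : Fin m → ℝ) : ℝ :=
  ∏ i : Fin m, Real.sin (φ i) ^ ((i : ℕ) + 1)

noncomputable def Jfun (m : ℕ) : ℝ := ∫ φ in Rregion m, Ffun m φ

lemma mem_Rregion_iff {m : ℕ} {φ : Fin m → ℝ} :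
    φ ∈ Rregion m ↔ ∀ i, φ i ∈ Set.Icc (lbd m φ i) (π/2) := Iff.rfl

lemma sin_mem_of_Icc {x : ℝ} (hx : x ∈ Set.Icc (π/4) (π/2)) :
    0 < Real.sin x ∧ Real.sin x ≤ 1 := by
  refine ⟨Real.sin_pos_of_pos_of_lt_pi (lt_of_lt_of_le (by positivity) hx.1)
    (lt_of_le_of_lt hx.2 (by linarith [pi_pos])), Real.sin_le_one x⟩

lemma mem_Icc_of_mem_Rregion {m : ℕ} {φ : Fin m → ℝ} (hφ : φ ∈ Rregion m) :
    ∀ i : Fin m, φ i ∈ Set.Icc (π/4) (π/2) := by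
  have key : ∀ n : ℕ, ∀ i : Fin m, (i : ℕ) = n → φ i ∈ Set.Icc (π/4) (π/2) := by
    intro n
    induction n using Nat.strong_induction_on with
    | _ n ih =>
      intro i hi
      obtain ⟨h1, h2⟩ := (mem_Rregion_iff.mp hφ) i
      refine ⟨?_, h2⟩
      by_cases h0 : (i : ℕ) = 0
      · simpa [lbd, h0] using h1
      · rw [lbd, if_neg h0] at h1
        refine le_trans ?_ h1
        rw [← Real.arctan_one]
        apply Real.arctan_strictMono.monotone
        calc (1:ℝ) = ∏ _j ∈ Finset.univ.filter (fun j : Fin m => j < i), (1:ℝ) := by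
              rw [Finset.prod_const_one]
          _ ≤ _ := by
              apply Finset.prod_le_prod (fun _ _ => zero_le_one)
              intro j hj
              have hj' : j < i := (Finset.mem_filter.mp hj).2
              have hjm := ih (j : ℕ) (hi ▸ hj') j rfl
              obtain ⟨hs0, hs1⟩ := sin_mem_of_Icc hjm
              rw [le_inv_comm₀ zero_lt_one hs0]
              simpa using hs1
  exact fun i => key (i : ℕ) i rfl

lemma one_le_prod_inv_sin {m : ℕ} {φ : Fin m → ℝ} (s : Finset (Fin m))
    (hφ : ∀ i ∈ s, φ i ∈ Set.Icc (π/4) (π/2)) :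
    1 ≤ ∏ j ∈ s, (Real.sin (φ j))⁻¹ := by
  calc (1:ℝ) = ∏ _j ∈ s, (1:ℝ) := by rw [Finset.prod_const_one]
    _ ≤ _ := by
        apply Finset.prod_le_prod (fun _ _ => zero_le_one)
        intro j hj
        obtain ⟨hs0, hs1⟩ := sin_mem_of_Icc (hφ j hj)
        rw [le_inv_comm₀ zero_lt_one hs0]
        simpa using hs1

lemma pi_div_four_le_Afun {m : ℕ} {y : Fin m → ℝ} (hy : y ∈ Rregion m) :
    π/4 ≤ Afun m y := by
  rw [Afun, ← Real.arctan_one]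
  exact Real.arctan_strictMono.monotone
    (one_le_prod_inv_sin _ (fun i _ => mem_Icc_of_mem_Rregion hy i))

lemma measurable_lbd (m : ℕ) (i : Fin m) : Measurable (fun φ => lbd m φ i) := by
  unfold lbd
  split
  · exact measurable_const
  · exact Real.continuous_arctan.measurable.comp
      (Finset.measurable_prod _ (fun j _ =>
        ((Real.measurable_sin.comp (measurable_pi_apply j)).inv)))

lemma measurableSet_Rregion (m : ℕ) : MeasurableSet (Rregion m) := by
  have : Rregion m = ⋂ i : Fin m, ({φ : Fin m → ℝ | lbd m φ i ≤ φ i} ∩ {φ | φ i ≤ π/2}) := by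
    ext φ; simp [mem_Rregion_iff, Set.mem_Icc, forall_and, Set.mem_iInter]
  rw [this]
  exact MeasurableSet.iInter (fun i =>
    (measurableSet_le (measurable_lbd m i) (measurable_pi_apply i)).inter
    (measurableSet_le (measurable_pi_apply i) measurable_const))

lemma measurable_Ffun (m : ℕ) : Measurable (Ffun m) :=
  Finset.measurable_prod _ (fun i _ =>
    (Real.measurable_sin.comp (measurable_pi_apply i)).pow_const _)

lemma Ffun_nonneg {m : ℕ} {φ : Fin m → ℝ} (hφ : φ ∈ Rregion m) : 0 ≤ Ffun m φ :=
  Finset.prod_nonneg fun i _ =>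
    pow_nonneg (sin_mem_of_Icc (mem_Icc_of_mem_Rregion hφ i)).1.le _

lemma Ffun_le_one {m : ℕ} {φ : Fin m → ℝ} (hφ : φ ∈ Rregion m) : Ffun m φ ≤ 1 := by
  apply Finset.prod_le_one
  · exact fun i _ => pow_nonneg (sin_mem_of_Icc (mem_Icc_of_mem_Rregion hφ i)).1.le _
  · exact fun i _ => pow_le_one₀ (sin_mem_of_Icc (mem_Icc_of_mem_Rregion hφ i)).1.le
      (sin_mem_of_Icc (mem_Icc_of_mem_Rregion hφ i)).2

lemma box_finite (m : ℕ) :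
    volume (Set.univ.pi (fun _ : Fin m => Set.Icc (π/4) (π/2))) < ⊤ := by
  rw [volume_pi_pi]
  simp [Real.volume_Icc]

lemma volume_Rregion_lt_top (m : ℕ) : volume (Rregion m) < ⊤ :=
  lt_of_le_of_lt (measure_mono (fun φ hφ => by
    rw [Set.mem_univ_pi]; exact mem_Icc_of_mem_Rregion hφ)) (box_finite m)

lemma integrableOn_of_bounded_on {m : ℕ} {s : Set (Fin m → ℝ)} (hs : MeasurableSet s)
    (hvol : volume s < ⊤) {f : (Fin m → ℝ) → ℝ} (hf : Measurable f) {C : ℝ}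
    (hb : ∀ x ∈ s, |f x| ≤ C) : IntegrableOn f s := by
  apply Measure.integrableOn_of_bounded hvol.ne hf.aestronglyMeasurable (M := C)
  exact (ae_restrict_mem hs).mono (fun x hx => by simpa using hb x hx)

lemma integrableOn_Ffun (m : ℕ) : IntegrableOn (Ffun m) (Rregion m) :=
  integrableOn_of_bounded_on (measurableSet_Rregion m) (volume_Rregion_lt_top m)
    (measurable_Ffun m) (C := 1)
    (fun x hx => abs_le.mpr ⟨by linarith [Ffun_nonneg hx], Ffun_le_one hx⟩)

lemma filter_lt_castSucc (m : ℕ) (k : Fin m) :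
    (Finset.univ.filter (fun j : Fin (m+1) => j < Fin.castSucc k)) =
      (Finset.univ.filter (fun j : Fin m => j < k)).map Fin.castSuccEmb := by
  ext j
  simp only [Finset.mem_filter, Finset.mem_map, Finset.mem_univ, true_and,
    Fin.coe_castSuccEmb]
  constructor
  · intro hj
    have hne : j ≠ Fin.last m := by
      intro h
      subst h
      exact absurd (lt_of_le_of_lt (Fin.castSucc_lt_last k).le hj) (lt_irrefl _)
    obtain ⟨j', rfl⟩ := Fin.exists_castSucc_eq.mpr hne
    exact ⟨j', by simpa [Fin.castSucc_lt_castSucc_iff] using hj, rfl⟩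
  · rintro ⟨j', hj', rfl⟩
    simpa [Fin.castSucc_lt_castSucc_iff] using hj'

lemma filter_lt_last (m : ℕ) :
    (Finset.univ.filter (fun j : Fin (m+1) => j < Fin.last m)) =
      (Finset.univ : Finset (Fin m)).map Fin.castSuccEmb := by
  ext j
  simp only [Finset.mem_filter, Finset.mem_map, Finset.mem_univ, true_and,
    Fin.coe_castSuccEmb]
  constructor
  · intro hj
    obtain ⟨j', rfl⟩ := Fin.exists_castSucc_eq.mpr hj.ne
    exact ⟨j', rfl⟩
  · rintro ⟨j', rfl⟩
    exact Fin.castSucc_lt_last j'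

lemma lbd_snoc_castSucc {m : ℕ} (y : Fin m → ℝ) (t : ℝ) (k : Fin m) :
    lbd (m+1) (Fin.snoc y t) (Fin.castSucc k) = lbd m y k := by
  unfold lbd
  simp only [Fin.coe_castSucc]
  split
  · rfl
  · congr 1
    rw [filter_lt_castSucc, Finset.prod_map]
    apply Finset.prod_congr rfl
    intro j _
    rw [show (Fin.castSuccEmb j : Fin (m+1)) = Fin.castSucc j from rfl,
      Fin.snoc_castSucc]

lemma lbd_snoc_last {m : ℕ} (y : Fin m → ℝ) (t : ℝ) :
    lbd (m+1) (Fin.snoc y t) (Fin.last m) = Afun m y := by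
  unfold lbd Afun
  rcases Nat.eq_zero_or_pos m with hm | hm
  · subst hm
    simp [Real.arctan_one]
  · rw [if_neg (by simp only [Fin.val_last]; omega)]
    congr 1
    rw [filter_lt_last, Finset.prod_map]
    apply Finset.prod_congr rfl
    intro j _
    rw [show (Fin.castSuccEmb j : Fin (m+1)) = Fin.castSucc j from rfl,
      Fin.snoc_castSucc]

lemma Ffun_snoc {m : ℕ} (y : Fin m → ℝ) (t : ℝ) :
    Ffun (m+1) (Fin.snoc y t) = Ffun m y * Real.sin t ^ (m+1) := by
  unfold Ffun
  rw [Fin.prod_univ_castSucc]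
  congr 1
  · exact Finset.prod_congr rfl (fun i _ => by rw [Fin.snoc_castSucc, Fin.coe_castSucc])
  · rw [Fin.snoc_last]
    rfl

lemma snoc_mem_Rregion_iff {m : ℕ} (y : Fin m → ℝ) (t : ℝ) :
    Fin.snoc y t ∈ Rregion (m+1) ↔ y ∈ Rregion m ∧ t ∈ Set.Icc (Afun m y) (π/2) := by
  rw [mem_Rregion_iff, mem_Rregion_iff]
  constructor
  · intro h
    refine ⟨fun k => ?_, ?_⟩
    · have := h (Fin.castSucc k)
      rwa [lbd_snoc_castSucc, Fin.snoc_castSucc] at this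
    · have := h (Fin.last m)
      rwa [lbd_snoc_last, Fin.snoc_last] at this
  · rintro ⟨h1, h2⟩ i
    induction i using Fin.lastCases with
    | last => rwa [lbd_snoc_last, Fin.snoc_last]
    | cast k => rw [lbd_snoc_castSucc, Fin.snoc_castSucc]; exact h1 k

lemma wallis (k : ℕ) : (∫ t in (0:ℝ)..(π/2), Real.sin t ^ k) =
    Real.sqrt π / 2 * (Real.Gamma (((k:ℝ)+1)/2) / Real.Gamma ((k:ℝ)/2 + 1)) := by
  induction k using Nat.twoStepInduction with
  | zero =>
    simp only [Nat.cast_zero, pow_zero, zero_add]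
    rw [intervalIntegral.integral_const]
    norm_num
    rw [Real.Gamma_one_half_eq, div_mul_eq_mul_div, Real.mul_self_sqrt pi_pos.le]
  | one =>
    simp only [Nat.cast_one, pow_one, integral_sin]
    rw [Real.cos_zero, Real.cos_pi_div_two, sub_zero]
    have h2 : ((1:ℝ)+1)/2 = 1 := by norm_num
    rw [h2, Real.Gamma_one]
    rw [show (1:ℝ)/2 + 1 = 1/2 + 1 from rfl, Real.Gamma_add_one (by norm_num : (1:ℝ)/2 ≠ 0),
      Real.Gamma_one_half_eq]
    have : Real.sqrt π ≠ 0 := (Real.sqrt_pos.mpr pi_pos).ne'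
    field_simp
  | more n ih _ =>
    have hrec := integral_sin_pow n (a := 0) (b := π/2)
    rw [Real.sin_zero, Real.cos_pi_div_two, Real.cos_zero] at hrec
    have hz : (0:ℝ) ^ (n+1) = 0 := zero_pow (Nat.succ_ne_zero n)
    rw [hz] at hrec
    simp only [mul_zero, zero_mul, mul_one, sub_zero, zero_sub, zero_div] at hrec
    rw [hrec, ih]
    have ha : ((n:ℝ)+1)/2 ≠ 0 := by positivity
    have hb : (n:ℝ)/2 + 1 ≠ 0 := by positivity
    have e1 : ((n:ℝ)+2+1)/2 = ((n:ℝ)+1)/2 + 1 := by ring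
    have e2 : ((n:ℝ)+2)/2 + 1 = ((n:ℝ)/2 + 1) + 1 := by ring
    push_cast
    rw [e1, e2, Real.Gamma_add_one ha, Real.Gamma_add_one hb]
    have hΓb : Real.Gamma ((n:ℝ)/2+1) ≠ 0 := (Real.Gamma_pos_of_pos (by positivity)).ne'
    have hn2 : (n:ℝ) + 2 ≠ 0 := by positivity
    field_simp
    ring

lemma exists_box (m : ℕ) : ∃ b : ℝ, π/4 < b ∧ b < π/2 ∧
    (Set.univ.pi fun _ : Fin m => Set.Icc b (π/2)) ⊆ Rregion m := by
  set c : ℝ := 3 * π / 8 with hc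
  have hc1 : π/4 < c := by rw [hc]; linarith [pi_pos]
  have hc2 : c < π/2 := by rw [hc]; linarith [pi_pos]
  have htend : Filter.Tendsto (fun b : ℝ => Real.arctan ((Real.sin b)⁻¹ ^ m))
      (nhdsWithin (π/2) (Set.Iio (π/2))) (nhds (π/4)) := by
    have : Real.arctan (((Real.sin (π/2))⁻¹) ^ m) = π/4 := by
      rw [Real.sin_pi_div_two]; simp [Real.arctan_one]
    rw [← this]
    apply Filter.Tendsto.mono_left _ nhdsWithin_le_nhds
    have hca : ContinuousAt (fun b : ℝ => Real.arctan ((Real.sin b)⁻¹ ^ m)) (π/2) := by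
      apply Real.continuous_arctan.continuousAt.comp
      exact (Real.continuous_sin.continuousAt.inv₀
        (by rw [Real.sin_pi_div_two]; norm_num)).pow m
    exact hca.tendsto
  have h1 : ∀ᶠ b in nhdsWithin (π/2) (Set.Iio (π/2)),
      Real.arctan ((Real.sin b)⁻¹ ^ m) < c :=
    htend.eventually_lt_const hc1
  have h2 : ∀ᶠ b in nhdsWithin (π/2) (Set.Iio (π/2)), c < b :=
    eventually_nhdsWithin_of_eventually_nhds (eventually_gt_nhds hc2)
  have h3 : ∀ᶠ b in nhdsWithin (π/2) (Set.Iio (π/2)), b < π/2 :=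
    eventually_mem_nhdsWithin
  obtain ⟨b, ⟨hb1, hb2⟩, hb3⟩ := ((h1.and h2).and h3).exists
  refine ⟨b, lt_trans hc1 hb2, hb3, ?_⟩
  intro φ hφ
  rw [Set.mem_univ_pi] at hφ
  have hb0 : 0 < b := lt_trans (by positivity) (lt_trans hc1 hb2)
  have hsinb : 0 < Real.sin b :=
    Real.sin_pos_of_pos_of_lt_pi hb0 (lt_trans hb3 (by linarith [pi_pos]))
  rw [mem_Rregion_iff]
  intro i
  refine ⟨?_, (hφ i).2⟩
  have hbφ : b ≤ φ i := (hφ i).1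
  rw [lbd]
  split
  · exact le_trans (le_of_lt (lt_trans hc1 hb2)) hbφ
  · refine le_trans ?_ hbφ
    refine le_trans ?_ hb2.le
    refine le_trans ?_ hb1.le
    apply Real.arctan_strictMono.monotone
    calc ∏ j ∈ Finset.univ.filter (fun j : Fin m => j < i), (Real.sin (φ j))⁻¹
        ≤ ∏ _j ∈ Finset.univ.filter (fun j : Fin m => j < i), (Real.sin b)⁻¹ := by
          apply Finset.prod_le_prod
          · intro j _
            have : 0 < Real.sin (φ j) := (sin_mem_of_Icc ⟨le_trans (le_of_lt
              (lt_trans hc1 hb2)) (hφ j).1, (hφ j).2⟩).1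
            positivity
          · intro j _
            apply inv_anti₀ hsinb
            apply Real.strictMonoOn_sin.monotoneOn ⟨by linarith [pi_pos], hb3.le.trans
              (by linarith [pi_pos])⟩ ⟨by nlinarith [pi_pos, (hφ j).1], (hφ j).2.trans
              (by linarith [pi_pos])⟩ (hφ j).1
      _ = (Real.sin b)⁻¹ ^ (Finset.univ.filter (fun j : Fin m => j < i)).card := by
          rw [Finset.prod_const]
      _ ≤ (Real.sin b)⁻¹ ^ m := by
          apply pow_le_pow_right₀
          · rw [le_inv_comm₀ zero_lt_one hsinb]
            simpa using Real.sin_le_one b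
          · exact le_trans (Finset.card_filter_le _ _) (by simp)

lemma Jfun_pos (m : ℕ) : 0 < Jfun m := by
  obtain ⟨b, hb1, hb2, hbox⟩ := exists_box m
  set box := Set.univ.pi fun _ : Fin m => Set.Icc b (π/2) with hbox_def
  have hboxmeas : MeasurableSet box := MeasurableSet.univ_pi fun _ => measurableSet_Icc
  have hb0 : 0 < b := lt_trans (by positivity) hb1
  have hsinb : 0 < Real.sin b :=
    Real.sin_pos_of_pos_of_lt_pi hb0 (lt_trans hb2 (by linarith [pi_pos]))
  set c : ℝ := ∏ i : Fin m, Real.sin b ^ ((i:ℕ)+1) with hc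
  have hcpos : 0 < c := Finset.prod_pos (fun i _ => pow_pos hsinb _)
  have hFb : ∀ φ ∈ box, c ≤ Ffun m φ := by
    intro φ hφ
    rw [Set.mem_univ_pi] at hφ
    apply Finset.prod_le_prod (fun i _ => (pow_pos hsinb _).le)
    intro i _
    apply pow_le_pow_left₀ hsinb.le
    apply Real.strictMonoOn_sin.monotoneOn ⟨by linarith [pi_pos], hb2.le.trans
      (by linarith [pi_pos])⟩ ⟨by nlinarith [pi_pos, (hφ i).1], (hφ i).2.trans
      (by linarith [pi_pos])⟩ (hφ i).1
  have hvolbox : (volume box).toReal = (π/2 - b) ^ m := by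
    rw [hbox_def, volume_pi_pi]
    simp only [Real.volume_Icc, Finset.prod_const, Finset.card_univ, Fintype.card_fin]
    rw [ENNReal.toReal_pow, ENNReal.toReal_ofReal (by linarith)]
  have hvolfin : volume box ≠ ⊤ := by
    rw [hbox_def, volume_pi_pi]
    simp only [Real.volume_Icc, Finset.prod_const, Finset.card_univ, Fintype.card_fin]
    exact (ENNReal.pow_lt_top ENNReal.ofReal_lt_top).ne
  have h1 : c * (volume box).toReal ≤ ∫ φ in box, Ffun m φ :=
    setIntegral_ge_of_const_le_real hboxmeas hvolfin hFb ((integrableOn_Ffun m).mono_set hbox)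
  have h2 : (∫ φ in box, Ffun m φ) ≤ Jfun m := by
    apply setIntegral_mono_set (integrableOn_Ffun m)
    · exact (ae_restrict_mem (measurableSet_Rregion m)).mono (fun x hx => Ffun_nonneg hx)
    · exact HasSubset.Subset.eventuallyLE hbox
  have : 0 < c * (volume box).toReal := by
    rw [hvolbox]
    have : 0 < (π/2 - b) ^ m := pow_pos (by linarith) m
    positivity
  linarith

lemma Jfun_succ_le (m : ℕ) :
    Jfun (m+1) ≤ (∫ t in Set.Icc (π/4) (π/2), Real.sin t ^ (m+1)) * Jfun m := by
  classical
  set W' : ℝ := ∫ t in Set.Icc (π/4) (π/2), Real.sin t ^ (m+1) with hW'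
  set e := MeasurableEquiv.piFinSuccAbove (fun _ : Fin (m+1) => ℝ) (Fin.last m) with he_def
  have hmp : MeasurePreserving e.symm volume volume :=
    (volume_preserving_piFinSuccAbove (fun _ : Fin (m+1) => ℝ) (Fin.last m)).symm
  have hesnoc : ∀ z : ℝ × (Fin m → ℝ), e.symm z = Fin.snoc z.2 z.1 :=
    fun z => Fin.insertNth_last' z.1 z.2
  set G : (Fin (m+1) → ℝ) → ℝ := (Rregion (m+1)).indicator (Ffun (m+1)) with hG
  set g : (Fin m → ℝ) → ℝ :=
    fun y => ∫ t in Set.Icc (Afun m y) (π/2), Real.sin t ^ (m+1) with hg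
  have step1 : Jfun (m+1) = ∫ z : ℝ × (Fin m → ℝ), G (e.symm z) := by
    rw [Jfun, ← integral_indicator (measurableSet_Rregion (m+1)), ← hG,
      ← hmp.integral_comp e.symm.measurableEmbedding]
  have hGz : ∀ z : ℝ × (Fin m → ℝ), G (e.symm z) =
      (Rregion m).indicator
        (fun y => Ffun m y * (Set.Icc (Afun m y) (π/2)).indicator
          (fun t => Real.sin t ^ (m+1)) z.1) z.2 := by
    intro z
    rw [hesnoc z, hG]
    by_cases h2 : z.2 ∈ Rregion m
    · by_cases h1 : z.1 ∈ Set.Icc (Afun m z.2) (π/2)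
      · rw [Set.indicator_of_mem ((snoc_mem_Rregion_iff _ _).mpr ⟨h2, h1⟩),
          Set.indicator_of_mem h2, Set.indicator_of_mem h1, Ffun_snoc]
      · rw [Set.indicator_of_notMem (fun hmem => h1 ((snoc_mem_Rregion_iff _ _).mp hmem).2),
          Set.indicator_of_mem h2, Set.indicator_of_notMem h1, mul_zero]
    · rw [Set.indicator_of_notMem (fun hmem => h2 ((snoc_mem_Rregion_iff _ _).mp hmem).1),
        Set.indicator_of_notMem h2]
  have hGint : Integrable G := by
    rw [hG, integrable_indicator_iff (measurableSet_Rregion (m+1))]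
    exact integrableOn_Ffun (m+1)
  have hHint : Integrable (fun z : ℝ × (Fin m → ℝ) => G (e.symm z)) :=
    (hmp.integrable_comp_emb e.symm.measurableEmbedding).mpr hGint
  have hHint' : Integrable (fun z : ℝ × (Fin m → ℝ) => G (e.symm z))
      ((volume : Measure ℝ).prod (volume : Measure (Fin m → ℝ))) := by
    rwa [← Measure.volume_eq_prod]
  have step2 : (∫ z : ℝ × (Fin m → ℝ), G (e.symm z)) =
      ∫ y : Fin m → ℝ, ∫ t : ℝ, G (e.symm (t, y)) := by
    rw [Measure.volume_eq_prod]
    exact integral_prod_symm _ hHint'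
  have hinner : ∀ y : Fin m → ℝ, (∫ t : ℝ, G (e.symm (t, y))) =
      (Rregion m).indicator (fun y => Ffun m y * g y) y := by
    intro y
    simp only [hGz]
    by_cases h2 : y ∈ Rregion m
    · rw [Set.indicator_of_mem h2]
      simp only [Set.indicator_of_mem h2]
      rw [integral_const_mul, hg]
      congr 1
      exact integral_indicator measurableSet_Icc
    · simp only [Set.indicator_of_notMem h2, integral_zero]
  have hFg_int : IntegrableOn (fun y => Ffun m y * g y) (Rregion m) := by
    rw [← integrable_indicator_iff (measurableSet_Rregion m)]
    have h := hHint'.integral_prod_right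
    have heq : (fun y => ∫ t : ℝ, G (e.symm (t, y))) =
        (Rregion m).indicator (fun y => Ffun m y * g y) := funext hinner
    rwa [heq] at h
  have hsin_int : IntegrableOn (fun t => Real.sin t ^ (m+1)) (Set.Icc (π/4) (π/2)) :=
    (Real.continuous_sin.pow (m+1)).integrableOn_Icc
  have hsin_nonneg : 0 ≤ᵐ[volume.restrict (Set.Icc (π/4) (π/2))]
      (fun t => Real.sin t ^ (m+1)) := by
    refine (ae_restrict_mem measurableSet_Icc).mono (fun t ht => ?_)
    exact pow_nonneg (Real.sin_nonneg_of_nonneg_of_le_pi (by linarith [pi_pos, ht.1])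
      (by linarith [pi_pos, ht.2])) _
  have hgle : ∀ y ∈ Rregion m, g y ≤ W' := by
    intro y hy
    rw [hg, hW']
    apply setIntegral_mono_set hsin_int hsin_nonneg
    exact HasSubset.Subset.eventuallyLE (Set.Icc_subset_Icc_left (pi_div_four_le_Afun hy))
  calc Jfun (m+1) = ∫ y : Fin m → ℝ, ∫ t : ℝ, G (e.symm (t, y)) := step1.trans step2
    _ = ∫ y in Rregion m, Ffun m y * g y := by
        rw [funext hinner]
        exact integral_indicator (measurableSet_Rregion m)
    _ ≤ ∫ y in Rregion m, W' * Ffun m y := by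
        apply setIntegral_mono_on hFg_int ((integrableOn_Ffun m).const_mul W')
          (measurableSet_Rregion m)
        intro y hy
        rw [mul_comm W' _]
        exact mul_le_mul_of_nonneg_left (hgle y hy) (Ffun_nonneg hy)
    _ = W' * Jfun m := by rw [integral_const_mul, Jfun]

lemma Jfun_zero : Jfun 0 = 1 := by
  have hR : Rregion 0 = Set.univ := Set.eq_univ_iff_forall.mpr (fun φ i => i.elim0)
  have hF : Ffun 0 = fun _ => (1:ℝ) := by
    funext φ
    rw [Ffun]
    simp
  rw [Jfun, hF, hR, Measure.restrict_univ, integral_const, smul_eq_mul, mul_one,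
    volume_pi, measureReal_def, Measure.pi_univ]
  simp

lemma Ifun_succ (m : ℕ) : Ifun (m+1) = Jfun m := by
  rcases Nat.eq_zero_or_pos m with rfl | hm
  · rw [Ifun, if_pos le_rfl, Jfun_zero]
  · rw [Ifun, if_neg (by omega)]
    rfl

lemma Icc_lt_interval (k : ℕ) :
    (∫ t in Set.Icc (π/4) (π/2), Real.sin t ^ k) < ∫ t in (0:ℝ)..(π/2), Real.sin t ^ k := by
  have hcont : Continuous fun t : ℝ => Real.sin t ^ k := Real.continuous_sin.pow k
  have h1 : IntervalIntegrable (fun t : ℝ => Real.sin t ^ k) volume 0 (π/4) :=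
    hcont.intervalIntegrable _ _
  have h2 : IntervalIntegrable (fun t : ℝ => Real.sin t ^ k) volume (π/4) (π/2) :=
    hcont.intervalIntegrable _ _
  have hsplit : (∫ t in (0:ℝ)..(π/4), Real.sin t ^ k) + (∫ t in (π/4:ℝ)..(π/2), Real.sin t ^ k)
      = ∫ t in (0:ℝ)..(π/2), Real.sin t ^ k :=
    intervalIntegral.integral_add_adjacent_intervals h1 h2
  have hpos : 0 < ∫ t in (0:ℝ)..(π/4), Real.sin t ^ k := by
    apply intervalIntegral.intervalIntegral_pos_of_pos_on h1
    · intro x hx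
      exact pow_pos (Real.sin_pos_of_pos_of_lt_pi hx.1 (by nlinarith [pi_pos, hx.2])) k
    · positivity
  have heq : (∫ t in Set.Icc (π/4) (π/2), Real.sin t ^ k)
      = ∫ t in (π/4:ℝ)..(π/2), Real.sin t ^ k := by
    rw [intervalIntegral.integral_of_le (by linarith [pi_pos]), integral_Icc_eq_integral_Ioc]
  rw [heq, ← hsplit]
  linarith

/-- For every integer `p ≥ 1`,
`(2/√π) Γ(p/2+1)/Γ(p/2+1/2) < I(p)/I(p+1)`; equivalently,
`I(p+1) < (√π/2)(Γ(p/2+1/2)/Γ(p/2+1)) I(p)`. -/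
theorem Ifun_ratio_lower_bound (p : ℕ) (hp : 1 ≤ p) :
    (2 / Real.sqrt π) * (Real.Gamma ((p : ℝ) / 2 + 1) / Real.Gamma ((p : ℝ) / 2 + 1 / 2)) <
        Ifun p / Ifun (p + 1) ∧
    Ifun (p + 1) < (Real.sqrt π / 2) *
        (Real.Gamma ((p : ℝ) / 2 + 1 / 2) / Real.Gamma ((p : ℝ) / 2 + 1)) * Ifun p := by
  obtain ⟨m, rfl⟩ : ∃ m, p = m + 1 := ⟨p - 1, (Nat.succ_pred_eq_of_pos hp).symm⟩
  have hIp : Ifun (m+1) = Jfun m := Ifun_succ m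
  have hIp1 : Ifun (m+1+1) = Jfun (m+1) := Ifun_succ (m+1)
  have hargs1 : ((↑(m+1):ℝ)+1)/2 = (↑(m+1):ℝ)/2 + 1/2 := by push_cast; ring
  have hargs2 : (↑(m+1):ℝ)/2 + 1 = (↑(m+1):ℝ)/2 + 1 := rfl
  have hΓa : 0 < Real.Gamma ((↑(m+1):ℝ)/2 + 1) := Real.Gamma_pos_of_pos (by positivity)
  have hΓb : 0 < Real.Gamma ((↑(m+1):ℝ)/2 + 1/2) := Real.Gamma_pos_of_pos (by positivity)
  have hsπ : 0 < Real.sqrt π := Real.sqrt_pos.mpr pi_pos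
  have hW : (∫ t in (0:ℝ)..(π/2), Real.sin t ^ (m+1)) =
      Real.sqrt π / 2 * (Real.Gamma ((↑(m+1):ℝ)/2 + 1/2) / Real.Gamma ((↑(m+1):ℝ)/2 + 1)) := by
    rw [wallis (m+1), hargs1]
  have hJm : 0 < Jfun m := Jfun_pos m
  have key : Ifun (m+1+1) < Real.sqrt π / 2 *
      (Real.Gamma ((↑(m+1):ℝ)/2 + 1/2) / Real.Gamma ((↑(m+1):ℝ)/2 + 1)) * Ifun (m+1) := by
    rw [hIp1, hIp]
    calc Jfun (m+1) ≤ (∫ t in Set.Icc (π/4) (π/2), Real.sin t ^ (m+1)) * Jfun m :=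
          Jfun_succ_le m
      _ < (∫ t in (0:ℝ)..(π/2), Real.sin t ^ (m+1)) * Jfun m :=
          mul_lt_mul_of_pos_right (Icc_lt_interval (m+1)) hJm
      _ = _ := by rw [hW]
  refine ⟨?_, key⟩
  have hIp1pos : 0 < Ifun (m+1+1) := by rw [hIp1]; exact Jfun_pos (m+1)
  rw [lt_div_iff₀ hIp1pos]
  calc 2 / Real.sqrt π * (Real.Gamma ((↑(m+1):ℝ)/2 + 1) / Real.Gamma ((↑(m+1):ℝ)/2 + 1/2))
        * Ifun (m+1+1)
      < 2 / Real.sqrt π * (Real.Gamma ((↑(m+1):ℝ)/2 + 1) / Real.Gamma ((↑(m+1):ℝ)/2 + 1/2))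
        * (Real.sqrt π / 2 * (Real.Gamma ((↑(m+1):ℝ)/2 + 1/2) / Real.Gamma ((↑(m+1):ℝ)/2 + 1))
          * Ifun (m+1)) := by
        apply mul_lt_mul_of_pos_left key (by positivity)
    _ = Ifun (m+1) := by field_simp
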